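/- Let ρ₁, ρ₂ be density matrices on a finite-dimensional Hilbert space H, let K be a Hilbert space with dim K ≥ dim H, and let |φ₁⟩, |φ₂⟩ ∈ H ⊗ K be purifications of ρ₁, ρ₂ respectively. Then there exists a unitary U on K such that, setting |φ₂'⟩ = (I ⊗ U)|φ₂⟩, we have ‖|φ₁⟩⟨φ₁| − |φ₂'⟩⟨φ₂'|‖₁ ≤ 2·‖ρ₁ − ρ₂‖₁^(1/2). -/

import Mathlib

/-!
Write a vector of `H ⊗ K` as its `dH × dK` coefficient matrix `A`; its reduced state is `A Aᴴ`.
By the unitary freedom of Gram factorizations, every purification of `ρ` has coefficient matrix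
`√ρ E V`, where `E` embeds `H` isometrically into `K` and `V` is unitary on `K`. Choosing `U` to
replace `V₂` by `V₁`, the difference `φ₁ - (I ⊗ U) φ₂` has coefficient matrix `(√ρ₁ - √ρ₂) E V₁`,
so its squared norm is `Tr (√ρ₁ - √ρ₂)² ≤ ‖ρ₁ - ρ₂‖₁` by the Powers–Størmer inequality. Finally
`|φ⟩⟨φ| - |ψ⟩⟨ψ| = |φ⟩⟨φ - ψ| + |φ - ψ⟩⟨ψ|`, and a rank-one `|u⟩⟨v|` has trace norm at most
`‖u‖ ‖v‖`.

The trace-norm facts all come from `‖X‖₁ = max_V Re Tr (X V)` over unitaries `V`, which follows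
from the polar decomposition `X = W √(XᴴX)`.
-/

open scoped ComplexOrder

/-- The trace norm `‖A‖₁ = Tr √(AᴴA)` of a complex matrix. -/
noncomputable def traceNorm {n : Type*} [Fintype n] [DecidableEq n] (A : Matrix n n ℂ) : ℝ :=
  (((Matrix.posSemidef_conjTranspose_mul_self A).1.eigenvectorUnitary : Matrix n n ℂ) *
      Matrix.diagonal (fun i => ((Real.sqrt
        ((Matrix.posSemidef_conjTranspose_mul_self A).1.eigenvalues i) : ℝ) : ℂ)) *
      (star (Matrix.posSemidef_conjTranspose_mul_self A).1.eigenvectorUnitary :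
        Matrix n n ℂ)).trace.re

/-- The rank-one projection `|φ⟩⟨φ|` associated to a vector `φ`. -/
def outer {m : Type*} [Fintype m] (φ : EuclideanSpace ℂ m) : Matrix m m ℂ :=
  Matrix.of fun i j => φ i * star (φ j)

/-- The reduced density matrix on `H` of a vector `φ ∈ H ⊗ K` (partial trace over `K`). -/
noncomputable def reducedH {dH dK : ℕ} (φ : EuclideanSpace ℂ (Fin dH × Fin dK)) :
    Matrix (Fin dH) (Fin dH) ℂ :=
  Matrix.of fun i i' => ∑ j, φ (i, j) * star (φ (i', j))

/-- The action of `I ⊗ U` on a vector of `H ⊗ K`, for a matrix `U` acting on `K`. -/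
noncomputable def applyOnK {dH dK : ℕ} (U : Matrix (Fin dK) (Fin dK) ℂ)
    (φ : EuclideanSpace ℂ (Fin dH × Fin dK)) : EuclideanSpace ℂ (Fin dH × Fin dK) :=
  WithLp.toLp 2 fun p : Fin dH × Fin dK => ∑ j', U p.2 j' * φ (p.1, j')

open Matrix
open scoped MatrixOrder

section Isometry

variable {𝕜 E F : Type*} [RCLike 𝕜] [AddCommGroup E] [Module 𝕜 E]
  [NormedAddCommGroup F] [InnerProductSpace 𝕜 F] [FiniteDimensional 𝕜 F]

theorem LinearMap.exists_linearIsometry_comp_eq_of_norm_eq (T₁ T₂ : E →ₗ[𝕜] F)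
    (h : ∀ x, ‖T₁ x‖ = ‖T₂ x‖) : ∃ L : F →ₗᵢ[𝕜] F, ∀ x, L (T₂ x) = T₁ x := by
  have hker : LinearMap.ker T₂ ≤ LinearMap.ker T₁ := fun x hx => by
    rw [LinearMap.mem_ker, ← norm_eq_zero, h, norm_eq_zero, ← LinearMap.mem_ker]
    exact hx
  set f : LinearMap.range T₂ →ₗ[𝕜] F :=
    (LinearMap.ker T₂).liftQ T₁ hker ∘ₗ T₂.quotKerEquivRange.symm.toLinearMap
  have hf : ∀ x, f ⟨T₂ x, LinearMap.mem_range_self T₂ x⟩ = T₁ x := fun x => by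
    simp [f, LinearMap.quotKerEquivRange_symm_apply_image]
  have hf_norm : ∀ y, ‖f y‖ = ‖y‖ := by
    rintro ⟨_, x, rfl⟩
    rw [hf, h]
    rfl
  refine ⟨LinearIsometry.extend ⟨f, hf_norm⟩, fun x => ?_⟩
  rw [← hf x]
  exact LinearIsometry.extend_apply _ ⟨T₂ x, _⟩

end Isometry

section Gram

variable {𝕜 m n : Type*} [RCLike 𝕜] [Fintype m] [DecidableEq m] [Fintype n] [DecidableEq n]

theorem Matrix.toEuclideanLin_symm_mem_unitaryGroup
    (L : EuclideanSpace 𝕜 n →ₗᵢ[𝕜] EuclideanSpace 𝕜 n) :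
    toEuclideanLin.symm L.toLinearMap ∈ unitaryGroup n 𝕜 := by
  rw [mem_unitaryGroup_iff', star_eq_conjTranspose]
  apply toEuclideanLin.injective
  rw [toLpLin_mul_same, toEuclideanLin_conjTranspose_eq_adjoint, LinearEquiv.apply_symm_apply,
    LinearIsometry.adjoint_comp_self', toLpLin_one]

theorem Matrix.norm_toEuclideanLin_sq (A : Matrix m n 𝕜) (x : EuclideanSpace 𝕜 n) :
    ‖toEuclideanLin A x‖ ^ 2 = RCLike.re (inner 𝕜 x (toEuclideanLin (Aᴴ * A) x)) := by
  rw [@norm_sq_eq_re_inner 𝕜, toLpLin_mul_same, LinearMap.comp_apply,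
    toEuclideanLin_conjTranspose_eq_adjoint, LinearMap.adjoint_inner_right]

theorem Matrix.norm_toEuclideanLin_of_mem_unitaryGroup {V : Matrix n n 𝕜}
    (hV : V ∈ unitaryGroup n 𝕜) (x : EuclideanSpace 𝕜 n) : ‖toEuclideanLin V x‖ = ‖x‖ := by
  rw [← sq_eq_sq₀ (norm_nonneg _) (norm_nonneg _), norm_toEuclideanLin_sq,
    ← star_eq_conjTranspose, Unitary.star_mul_self_of_mem hV, toLpLin_one, LinearMap.id_apply,
    ← @norm_sq_eq_re_inner 𝕜]

theorem Matrix.exists_unitary_mul_eq_of_conjTranspose_mul_self_eq {A B : Matrix m n 𝕜}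
    (h : Aᴴ * A = Bᴴ * B) : ∃ U ∈ unitaryGroup m 𝕜, U * B = A := by
  obtain ⟨L, hL⟩ := (toEuclideanLin A).exists_linearIsometry_comp_eq_of_norm_eq (toEuclideanLin B)
    fun x => by
      rw [← sq_eq_sq₀ (norm_nonneg _) (norm_nonneg _), norm_toEuclideanLin_sq,
        norm_toEuclideanLin_sq, h]
  refine ⟨_, toEuclideanLin_symm_mem_unitaryGroup L, toEuclideanLin.injective ?_⟩
  ext1 x
  rw [toLpLin_mul_same, LinearMap.comp_apply, LinearEquiv.apply_symm_apply]
  exact hL x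

end Gram

section TraceNorm

variable {n : Type*} [Fintype n] [DecidableEq n]

theorem traceNorm_eq_re_trace_sqrt (A : Matrix n n ℂ) :
    traceNorm A = (CFC.sqrt (Aᴴ * A)).trace.re := by
  have h := posSemidef_conjTranspose_mul_self A
  rw [CFC.sqrt_eq_real_sqrt _ h.nonneg, cfcₙ_eq_cfc, h.1.cfc_eq, IsHermitian.cfc,
    Unitary.conjStarAlgAut_apply, traceNorm]
  rfl

theorem Matrix.PosSemidef.re_trace_mul_unitary_le {S M : Matrix n n ℂ} (hS : S.PosSemidef)
    (hM : M ∈ unitaryGroup n ℂ) : (S * M).trace.re ≤ S.trace.re := by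
  set V : Matrix n n ℂ := ↑hS.1.eigenvectorUnitary
  set D : Matrix n n ℂ := diagonal (RCLike.ofReal ∘ hS.1.eigenvalues)
  have hVM : star V * M * V ∈ unitaryGroup n ℂ :=
    mul_mem (mul_mem (Unitary.star_mem hS.1.eigenvectorUnitary.2) hM) hS.1.eigenvectorUnitary.2
  have htr : (S * M).trace = (D * (star V * M * V)).trace := by
    conv_lhs => rw [hS.1.spectral_theorem, Unitary.conjStarAlgAut_apply]
    rw [Matrix.mul_assoc, Matrix.mul_assoc, trace_mul_comm]
    simp only [Matrix.mul_assoc]; rfl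
  rw [htr, hS.1.trace_eq_sum_eigenvalues, trace, Complex.re_sum, Complex.re_sum]
  refine Finset.sum_le_sum fun i _ => ?_
  simp only [diag_apply, D, diagonal_mul, Function.comp_apply]
  simpa using mul_le_mul_of_nonneg_left
    ((Complex.re_le_norm _).trans (entry_norm_bound_of_unitary hVM i i)) (hS.eigenvalues_nonneg i)

theorem exists_unitary_mul_sqrt_conjTranspose_mul_self_eq (X : Matrix n n ℂ) :
    ∃ W ∈ unitaryGroup n ℂ, W * CFC.sqrt (Xᴴ * X) = X := by
  have hX := (posSemidef_conjTranspose_mul_self X).nonneg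
  refine exists_unitary_mul_eq_of_conjTranspose_mul_self_eq ?_
  rw [← star_eq_conjTranspose (CFC.sqrt _), (CFC.sqrt_nonneg _).isSelfAdjoint.star_eq,
    CFC.sqrt_mul_sqrt_self _ hX]

theorem re_trace_mul_unitary_le_traceNorm (X : Matrix n n ℂ) {V : Matrix n n ℂ}
    (hV : V ∈ unitaryGroup n ℂ) : (X * V).trace.re ≤ traceNorm X := by
  obtain ⟨W, hW, hXW⟩ := exists_unitary_mul_sqrt_conjTranspose_mul_self_eq X
  have htr : (X * V).trace = (CFC.sqrt (Xᴴ * X) * (V * W)).trace := by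
    conv_lhs => rw [← hXW]
    rw [Matrix.mul_assoc, trace_mul_comm, Matrix.mul_assoc]
  rw [traceNorm_eq_re_trace_sqrt, htr]
  exact (CFC.sqrt_nonneg _).posSemidef.re_trace_mul_unitary_le (mul_mem hV hW)

theorem exists_unitary_re_trace_mul_eq_traceNorm (X : Matrix n n ℂ) :
    ∃ V ∈ unitaryGroup n ℂ, (X * V).trace.re = traceNorm X := by
  obtain ⟨W, hW, hXW⟩ := exists_unitary_mul_sqrt_conjTranspose_mul_self_eq X
  refine ⟨star W, Unitary.star_mem hW, ?_⟩
  conv_lhs => rw [← hXW]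
  rw [traceNorm_eq_re_trace_sqrt, Matrix.mul_assoc, trace_mul_comm, Matrix.mul_assoc,
    Unitary.star_mul_self_of_mem hW, Matrix.mul_one]

theorem traceNorm_add_le (X Y : Matrix n n ℂ) :
    traceNorm (X + Y) ≤ traceNorm X + traceNorm Y := by
  obtain ⟨V, hV, hXY⟩ := exists_unitary_re_trace_mul_eq_traceNorm (X + Y)
  rw [← hXY, Matrix.add_mul, trace_add, Complex.add_re]
  exact add_le_add (re_trace_mul_unitary_le_traceNorm X hV) (re_trace_mul_unitary_le_traceNorm Y hV)

theorem traceNorm_vecMulVec_le (u v : EuclideanSpace ℂ n) :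
    traceNorm (vecMulVec u (star v)) ≤ ‖u‖ * ‖v‖ := by
  obtain ⟨V, hV, hV_eq⟩ := exists_unitary_re_trace_mul_eq_traceNorm (vecMulVec u (star v))
  have htr : (vecMulVec u (star v) * V).trace = inner ℂ v (toEuclideanLin V u) := by
    rw [vecMulVec_mul, trace_vecMulVec, dotProduct_comm, ← dotProduct_mulVec,
      EuclideanSpace.inner_eq_star_dotProduct]
    exact dotProduct_comm _ _
  calc traceNorm (vecMulVec u (star v)) = (inner ℂ v (toEuclideanLin V u)).re := by
        rw [← hV_eq, htr]
    _ ≤ ‖v‖ * ‖toEuclideanLin V u‖ := (Complex.re_le_norm _).trans (norm_inner_le_norm _ _)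
    _ = ‖u‖ * ‖v‖ := by rw [norm_toEuclideanLin_of_mem_unitaryGroup hV, mul_comm]

theorem sum_norm_diag_conj_le_traceNorm (Δ : Matrix n n ℂ) {V : Matrix n n ℂ}
    (hV : V ∈ unitaryGroup n ℂ) : ∑ i, ‖(star V * Δ * V) i i‖ ≤ traceNorm Δ := by
  set M := star V * Δ * V
  set P : Matrix n n ℂ := diagonal fun i => Complex.exp (-(M i i).arg * Complex.I)
  have hP : P ∈ unitaryGroup n ℂ := by
    rw [mem_unitaryGroup_iff', star_eq_conjTranspose, diagonal_conjTranspose,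
      diagonal_mul_diagonal, ← diagonal_one]
    congr 1
    ext i
    rw [Pi.star_apply, Complex.star_def, ← Complex.exp_conj, ← Complex.exp_add]
    simp
  have hMP : ∀ i, M i i * Complex.exp (-(M i i).arg * Complex.I) = ‖M i i‖ := fun i => by
    conv_lhs => rw [← Complex.norm_mul_exp_arg_mul_I (M i i)]
    rw [mul_assoc, ← Complex.exp_add]
    simp
  calc ∑ i, ‖M i i‖ = (M * P).trace.re := by
        simp only [trace, diag_apply, P, mul_diagonal, hMP, Complex.re_sum, Complex.ofReal_re]
    _ = (Δ * (V * P * star V)).trace.re := by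
        rw [show M * P = star V * (Δ * V * P) by simp only [M, Matrix.mul_assoc], trace_mul_comm]
        simp only [Matrix.mul_assoc]
    _ ≤ traceNorm Δ :=
        re_trace_mul_unitary_le_traceNorm Δ (mul_mem (mul_mem hV hP) (Unitary.star_mem hV))

end TraceNorm

section PowersStormer

variable {n : Type*} [Fintype n]

theorem Matrix.PosSemidef.norm_sub_apply_sq_le {P Q : Matrix n n ℂ} (hP : P.PosSemidef)
    (hQ : Q.PosSemidef) (hPQ : (P - Q).IsDiag) (i : n) :
    ‖(P - Q) i i‖ ^ 2 ≤ ‖(P * P - Q * Q) i i‖ := by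
  have hsq : (P * P - Q * Q) i i = P i i ^ 2 - Q i i ^ 2 := by
    rw [sub_apply, mul_apply, mul_apply, ← Finset.sum_sub_distrib, Finset.sum_eq_single i
      (fun j _ hj => ?_) (by simp), sq, sq]
    rw [← sub_eq_zero.mp (hPQ hj.symm), ← sub_eq_zero.mp (hPQ hj), sub_self]
  obtain ⟨a, ha, hPa⟩ := RCLike.nonneg_iff_exists_ofReal.mp hP.diag_nonneg
  obtain ⟨b, hb, hQb⟩ := RCLike.nonneg_iff_exists_ofReal.mp hQ.diag_nonneg
  rw [hsq, sub_apply, ← hPa, ← hQb]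
  norm_cast
  calc |a - b| ^ 2 = |a - b| * |a - b| := sq _
    _ ≤ (a + b) * |a - b| :=
        mul_le_mul_of_nonneg_right (abs_sub_le_iff.2 ⟨by linarith, by linarith⟩) (abs_nonneg _)
    _ = |a ^ 2 - b ^ 2| := by rw [sq_sub_sq, abs_mul, abs_of_nonneg (by linarith : 0 ≤ a + b)]

/-- The Powers–Størmer inequality, in the form `‖√A - √B‖₂² ≤ ‖A - B‖₁`. -/
theorem re_trace_sub_mul_sub_le_traceNorm [DecidableEq n] {S T : Matrix n n ℂ} (hS : S.PosSemidef)
    (hT : T.PosSemidef) : ((S - T) * (S - T)).trace.re ≤ traceNorm (S * S - T * T) := by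
  have hST := hS.1.sub hT.1
  set V : Matrix n n ℂ := ↑hST.eigenvectorUnitary
  have hV : V ∈ unitaryGroup n ℂ := hST.eigenvectorUnitary.2
  have hVV : V * star V = 1 := Unitary.mul_star_self_of_mem hV
  set P := star V * S * V
  set Q := star V * T * V
  have hP : P.PosSemidef := hS.conjTranspose_mul_mul_same V
  have hQ : Q.PosSemidef := hT.conjTranspose_mul_mul_same V
  have hPQ_conj : P - Q = star V * (S - T) * V := by rw [Matrix.mul_sub, Matrix.sub_mul]
  have hPQ : P - Q = diagonal (RCLike.ofReal ∘ hST.eigenvalues) := by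
    rw [hPQ_conj, ← hST.conjStarAlgAut_star_eigenvectorUnitary, Unitary.conjStarAlgAut_star_apply]
  have hsq : star V * (S * S - T * T) * V = P * P - Q * Q := by
    simp only [P, Q, Matrix.mul_sub, Matrix.sub_mul, Matrix.mul_assoc]
    simp only [← Matrix.mul_assoc V, hVV, Matrix.one_mul]
  have htr : ((S - T) * (S - T)).trace.re = ∑ i, ‖(P - Q) i i‖ ^ 2 := by
    have hcyc : ((P - Q) * (P - Q)).trace = ((S - T) * (S - T)).trace := by
      rw [hPQ_conj, show star V * (S - T) * V * (star V * (S - T) * V)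
          = star V * ((S - T) * (V * star V) * (S - T) * V) by simp only [Matrix.mul_assoc],
        hVV, Matrix.mul_one, trace_mul_comm, Matrix.mul_assoc, hVV, Matrix.mul_one]
    rw [← hcyc, hPQ, diagonal_mul_diagonal, trace_diagonal, Complex.re_sum]
    simp [sq]
  calc ((S - T) * (S - T)).trace.re = ∑ i, ‖(P - Q) i i‖ ^ 2 := htr
    _ ≤ ∑ i, ‖(P * P - Q * Q) i i‖ := Finset.sum_le_sum fun i _ =>
        hP.norm_sub_apply_sq_le hQ (hPQ ▸ isDiag_diagonal _) i
    _ ≤ traceNorm (S * S - T * T) := hsq ▸ sum_norm_diag_conj_le_traceNorm _ hV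

end PowersStormer

section Purification

variable {l m k : Type*}

theorem Matrix.mul_mul_conjTranspose_mul_eq [Fintype k] [Fintype l] [DecidableEq k] {R : Type*}
    [Semiring R] [StarRing R] {W : Matrix k l R} (hW : W * Wᴴ = 1) (X : Matrix m k R) :
    X * W * (X * W)ᴴ = X * Xᴴ := by
  rw [conjTranspose_mul, Matrix.mul_assoc, ← Matrix.mul_assoc W, hW, Matrix.one_mul]

theorem Matrix.submatrix_one_mul_conjTranspose [Fintype k] [DecidableEq m] [DecidableEq k]
    {R : Type*} [Semiring R] [StarRing R] {e : m → k} (he : Function.Injective e) :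
    (1 : Matrix k k R).submatrix e id * ((1 : Matrix k k R).submatrix e id)ᴴ = 1 := by
  rw [conjTranspose_submatrix, conjTranspose_one, ← submatrix_mul _ _ _ _ _ Function.bijective_id,
    Matrix.one_mul, submatrix_one _ he]

def coeffMatrix (φ : EuclideanSpace ℂ (m × k)) : Matrix m k ℂ :=
  Matrix.of fun i j => φ (i, j)

theorem coeffMatrix_sub (φ ψ : EuclideanSpace ℂ (m × k)) :
    coeffMatrix (φ - ψ) = coeffMatrix φ - coeffMatrix ψ :=
  rfl

theorem norm_sq_eq_re_trace_coeffMatrix [Fintype m] [Fintype k] (φ : EuclideanSpace ℂ (m × k)) :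
    ‖φ‖ ^ 2 = (coeffMatrix φ * (coeffMatrix φ)ᴴ).trace.re := by
  rw [EuclideanSpace.norm_sq_eq, Fintype.sum_prod_type, trace, Complex.re_sum]
  refine Finset.sum_congr rfl fun i _ => ?_
  simp only [diag_apply, mul_apply, coeffMatrix, conjTranspose_apply, of_apply, RCLike.star_def,
    Complex.mul_conj, Complex.normSq_eq_norm_sq, Complex.re_sum]
  norm_cast

theorem exists_unitary_coeffMatrix_eq_sqrt_mul [Fintype m] [Fintype k] [DecidableEq m]
    [DecidableEq k] {W : Matrix m k ℂ} (hW : W * Wᴴ = 1)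
    (φ : EuclideanSpace ℂ (m × k)) :
    ∃ V ∈ unitaryGroup k ℂ,
      coeffMatrix φ = CFC.sqrt (coeffMatrix φ * (coeffMatrix φ)ᴴ) * W * V := by
  set G := coeffMatrix φ * (coeffMatrix φ)ᴴ
  have hG : 0 ≤ G := (posSemidef_self_mul_conjTranspose _).nonneg
  obtain ⟨U, hU, hUS⟩ := exists_unitary_mul_eq_of_conjTranspose_mul_self_eq
    (A := (coeffMatrix φ)ᴴ) (B := (CFC.sqrt G * W)ᴴ) (by
      rw [conjTranspose_conjTranspose, conjTranspose_conjTranspose, mul_mul_conjTranspose_mul_eq hW,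
        ← star_eq_conjTranspose, (CFC.sqrt_nonneg G).isSelfAdjoint.star_eq,
        CFC.sqrt_mul_sqrt_self G hG])
  refine ⟨star U, Unitary.star_mem hU, ?_⟩
  rw [← conjTranspose_conjTranspose (coeffMatrix φ), ← hUS, conjTranspose_mul,
    conjTranspose_conjTranspose, star_eq_conjTranspose]

theorem norm_sub_sq_le_traceNorm_of_coeffMatrix_eq [Fintype m] [Fintype k] [DecidableEq m]
    {ρ σ : Matrix m m ℂ} (hρ : 0 ≤ ρ) (hσ : 0 ≤ σ) {W : Matrix m k ℂ} (hW : W * Wᴴ = 1)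
    {φ ψ : EuclideanSpace ℂ (m × k)}
    (hφ : coeffMatrix φ = CFC.sqrt ρ * W) (hψ : coeffMatrix ψ = CFC.sqrt σ * W) :
    ‖φ - ψ‖ ^ 2 ≤ traceNorm (ρ - σ) := by
  rw [norm_sq_eq_re_trace_coeffMatrix, coeffMatrix_sub, hφ, hψ, ← Matrix.sub_mul,
    mul_mul_conjTranspose_mul_eq hW, conjTranspose_sub, ← star_eq_conjTranspose,
    ← star_eq_conjTranspose, (CFC.sqrt_nonneg ρ).isSelfAdjoint.star_eq,
    (CFC.sqrt_nonneg σ).isSelfAdjoint.star_eq]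
  simpa only [CFC.sqrt_mul_sqrt_self ρ hρ, CFC.sqrt_mul_sqrt_self σ hσ] using
    re_trace_sub_mul_sub_le_traceNorm (CFC.sqrt_nonneg ρ).posSemidef (CFC.sqrt_nonneg σ).posSemidef

theorem traceNorm_outer_sub_outer_le [Fintype m] [DecidableEq m] (φ ψ : EuclideanSpace ℂ m) :
    traceNorm (outer φ - outer ψ) ≤ (‖φ‖ + ‖ψ‖) * ‖φ - ψ‖ := by
  have hsplit : outer φ - outer ψ = vecMulVec φ (star (φ - ψ)) + vecMulVec (φ - ψ) (star ψ) := by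
    ext i j
    simp [outer, vecMulVec]
    ring
  calc traceNorm (outer φ - outer ψ)
      ≤ traceNorm (vecMulVec φ (star (φ - ψ))) + traceNorm (vecMulVec (φ - ψ) (star ψ)) :=
        hsplit ▸ traceNorm_add_le _ _
    _ ≤ ‖φ‖ * ‖φ - ψ‖ + ‖φ - ψ‖ * ‖ψ‖ :=
        add_le_add (traceNorm_vecMulVec_le _ _) (traceNorm_vecMulVec_le _ _)
    _ = (‖φ‖ + ‖ψ‖) * ‖φ - ψ‖ := by ring

end Purification

section LocalTransition

variable {dH dK : ℕ}

theorem reducedH_eq (φ : EuclideanSpace ℂ (Fin dH × Fin dK)) :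
    reducedH φ = coeffMatrix φ * (coeffMatrix φ)ᴴ := by
  ext i i'
  simp [reducedH, coeffMatrix, mul_apply]

theorem coeffMatrix_applyOnK (U : Matrix (Fin dK) (Fin dK) ℂ)
    (φ : EuclideanSpace ℂ (Fin dH × Fin dK)) : coeffMatrix (applyOnK U φ) = coeffMatrix φ * Uᵀ := by
  ext i j
  simp [applyOnK, coeffMatrix, mul_apply, mul_comm]

theorem norm_applyOnK {U : Matrix (Fin dK) (Fin dK) ℂ} (hU : U ∈ unitaryGroup (Fin dK) ℂ)
    (φ : EuclideanSpace ℂ (Fin dH × Fin dK)) : ‖applyOnK U φ‖ = ‖φ‖ := by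
  rw [← sq_eq_sq₀ (norm_nonneg _) (norm_nonneg _), norm_sq_eq_re_trace_coeffMatrix,
    norm_sq_eq_re_trace_coeffMatrix, coeffMatrix_applyOnK, mul_mul_conjTranspose_mul_eq
      (Unitary.mul_star_self_of_mem (transpose_mem_unitaryGroup_iff.mpr hU))]

end LocalTransition

theorem local_transition_general {dH dK : ℕ} (hdim : dH ≤ dK)
    (ρ₁ ρ₂ : Matrix (Fin dH) (Fin dH) ℂ)
    (φ₁ φ₂ : EuclideanSpace ℂ (Fin dH × Fin dK))
    (hn₁ : ‖φ₁‖ = 1) (hn₂ : ‖φ₂‖ = 1)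
    (hpur₁ : reducedH φ₁ = ρ₁) (hpur₂ : reducedH φ₂ = ρ₂) :
    ∃ U ∈ Matrix.unitaryGroup (Fin dK) ℂ,
      traceNorm (outer φ₁ - outer (applyOnK U φ₂))
        ≤ 2 * traceNorm (ρ₁ - ρ₂) ^ ((1 : ℝ) / 2) := by
  obtain ⟨E, hE⟩ : ∃ E : Matrix (Fin dH) (Fin dK) ℂ, E * Eᴴ = 1 :=
    ⟨_, submatrix_one_mul_conjTranspose (Fin.castLE_injective hdim)⟩
  rw [reducedH_eq] at hpur₁ hpur₂
  obtain ⟨V₁, hV₁, h₁⟩ := exists_unitary_coeffMatrix_eq_sqrt_mul hE φ₁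
  obtain ⟨V₂, hV₂, h₂⟩ := exists_unitary_coeffMatrix_eq_sqrt_mul hE φ₂
  rw [hpur₁, Matrix.mul_assoc] at h₁
  rw [hpur₂] at h₂
  have hU : (star V₂ * V₁)ᵀ ∈ unitaryGroup (Fin dK) ℂ :=
    transpose_mem_unitaryGroup_iff.mpr (mul_mem (Unitary.star_mem hV₂) hV₁)
  refine ⟨_, hU, ?_⟩
  set φ₂' := applyOnK (star V₂ * V₁)ᵀ φ₂
  have h₂' : coeffMatrix φ₂' = CFC.sqrt ρ₂ * (E * V₁) := by
    rw [coeffMatrix_applyOnK, h₂, transpose_transpose, Matrix.mul_assoc _ V₂,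
      ← Matrix.mul_assoc V₂, Unitary.mul_star_self_of_mem hV₂, Matrix.one_mul, Matrix.mul_assoc]
  have hdist : ‖φ₁ - φ₂'‖ ^ 2 ≤ traceNorm (ρ₁ - ρ₂) :=
    norm_sub_sq_le_traceNorm_of_coeffMatrix_eq
      (hpur₁ ▸ (posSemidef_self_mul_conjTranspose _).nonneg)
      (hpur₂ ▸ (posSemidef_self_mul_conjTranspose _).nonneg)
      (by rwa [mul_mul_conjTranspose_mul_eq (Unitary.mul_star_self_of_mem hV₁)]) h₁ h₂'
  calc traceNorm (outer φ₁ - outer φ₂') ≤ (‖φ₁‖ + ‖φ₂'‖) * ‖φ₁ - φ₂'‖ :=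
        traceNorm_outer_sub_outer_le φ₁ φ₂'
    _ ≤ 2 * √(traceNorm (ρ₁ - ρ₂)) := by
        rw [hn₁, norm_applyOnK hU, hn₂, one_add_one_eq_two]
        exact mul_le_mul_of_nonneg_left (Real.le_sqrt_of_sq_le hdist) zero_le_two
    _ = 2 * traceNorm (ρ₁ - ρ₂) ^ ((1 : ℝ) / 2) := by rw [Real.sqrt_eq_rpow]

/-- Local transition theorem: purifications of nearby mixed states can be made nearby by a
unitary on the purifying system alone:
`‖ |φ₁⟩⟨φ₁| - |φ₂'⟩⟨φ₂'| ‖₁ ≤ 2 ‖ρ₁ - ρ₂‖₁^(1/2)` with `|φ₂'⟩ = (I ⊗ U)|φ₂⟩`. -/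
theorem local_transition {dH dK : ℕ} (hdim : dH ≤ dK)
    (ρ₁ ρ₂ : Matrix (Fin dH) (Fin dH) ℂ)
    (hρ₁ : ρ₁.PosSemidef) (hρ₂ : ρ₂.PosSemidef)
    (htr₁ : ρ₁.trace = 1) (htr₂ : ρ₂.trace = 1)
    (φ₁ φ₂ : EuclideanSpace ℂ (Fin dH × Fin dK))
    (hn₁ : ‖φ₁‖ = 1) (hn₂ : ‖φ₂‖ = 1)
    (hpur₁ : reducedH φ₁ = ρ₁) (hpur₂ : reducedH φ₂ = ρ₂) :
    ∃ U ∈ Matrix.unitaryGroup (Fin dK) ℂ,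
      traceNorm (outer φ₁ - outer (applyOnK U φ₂))
        ≤ 2 * traceNorm (ρ₁ - ρ₂) ^ ((1 : ℝ) / 2) :=
  local_transition_general hdim ρ₁ ρ₂ φ₁ φ₂ hn₁ hn₂ hpur₁ hpur₂
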